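/- arXiv:2205.01303 — 3 statements merged into one kernel-verified Lean document; each statement's English description precedes it below -/
import Mathlib

section
/- Let φ: ℝ≥0 → ℝ≥0 be defined by φ(r) = r for r ∈ [0,1] and φ(r) = exp(-(r-1)) for r > 1. Then φ(0) = 0, and for all 0 < ε < M < ∞, the infimum of φ over [ε, M] is positive (i.e., φ is of class B), but there is no function ψ of class K (ψ(0)=0, ψ strictly increasing) with ψ(r) ≤ φ(r) for all r ≥ 0. -/
theorem stmt_0 (φ : ℝ → ℝ)
    (hφ : ∀ r : ℝ, 0 ≤ r → φ r = if r ≤ 1 then r else Real.exp (-(r - 1))) :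
    φ 0 = 0 ∧
    (∀ ε M : ℝ, 0 < ε → ε < M → 0 < sInf (φ '' Set.Icc ε M)) ∧
    ¬ ∃ ψ : ℝ → ℝ, ψ 0 = 0 ∧ StrictMonoOn ψ (Set.Ici (0:ℝ)) ∧
        ∀ r : ℝ, 0 ≤ r → ψ r ≤ φ r := by
  refine ⟨by simp [hφ 0 le_rfl], ?_, ?_⟩
  · intro ε M hε hεM
    set c := min ε (Real.exp (-(M - 1))) with hc
    have hcpos : 0 < c := lt_min hε (Real.exp_pos _)
    have hne : (φ '' Set.Icc ε M).Nonempty :=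
      ⟨φ ε, ⟨ε, ⟨le_rfl, hεM.le⟩, rfl⟩⟩
    have hlb : ∀ x ∈ φ '' Set.Icc ε M, c ≤ x := by
      rintro x ⟨r, ⟨hr1, hr2⟩, rfl⟩
      rw [hφ r (hε.le.trans hr1)]
      split_ifs with h
      · exact (min_le_left _ _).trans hr1
      · refine (min_le_right _ _).trans ?_
        exact Real.exp_le_exp.mpr (by linarith)
    exact lt_of_lt_of_le hcpos (le_csInf hne hlb)
  · rintro ⟨ψ, hψ0, hmono, hle⟩
    have h1 : 0 < ψ 1 := by
      have := hmono (Set.mem_Ici.mpr le_rfl) (Set.mem_Ici.mpr zero_le_one) one_pos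
      rwa [hψ0] at this
    set r := max 2 (2 - Real.log (ψ 1)) with hr
    have hr2 : (2:ℝ) ≤ r := le_max_left _ _
    have hr1 : (1:ℝ) < r := by linarith
    have hφr : φ r = Real.exp (-(r - 1)) := by
      rw [hφ r (by linarith)]; rw [if_neg (not_le.mpr hr1)]
    have hsmall : φ r < ψ 1 := by
      rw [hφr]
      have : 2 - Real.log (ψ 1) ≤ r := le_max_right _ _
      calc Real.exp (-(r - 1)) < Real.exp (Real.log (ψ 1)) :=
            Real.exp_lt_exp.mpr (by linarith)
        _ = ψ 1 := Real.exp_log h1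
    have : ψ 1 < ψ r := hmono (Set.mem_Ici.mpr zero_le_one)
      (Set.mem_Ici.mpr (by linarith)) hr1
    have := hle r (by linarith)
    linarith
end

section
/- (Robbins–Siegmund) Let (z_t), (η_t), (γ_t), (ψ_t) be nonnegative stochastic processes adapted to a filtration (F_t) satisfying E[z_{t+1} | F_t] ≤ (1 + η_t) z_t + γ_t − ψ_t almost surely for all t. Then on the event Ω₀ = {∑_t η_t < ∞ and ∑_t γ_t < ∞}, almost surely lim_{t→∞} z_t exists and is finite, and ∑_t ψ_t < ∞. -/
/-!
Divide by `P_t = ∏_{s<t} (1 + η_s)`. The compensated process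
`X_t = z_t / P_t + ∑_{s<t} (ψ_s - γ_s) / P_{s+1}` then has nonpositive conditional drift and is
bounded below by `-∑_{s<t} γ_s`. Freezing it from the first time `∑_{s≤t} (η_s + γ_s)` exceeds `N`
gives an integrable supermartingale bounded below by `-N`, which converges almost surely.
Where `∑ η_t` and `∑ γ_t` are finite, for `N` large the freezing never happens, so `X_t`
converges; as `P_t` increases to a finite limit, `z_t` converges and `∑ ψ_t / P_{t+1}`, hence
`∑ ψ_t`, is finite.
-/

open MeasureTheory Filter Topology Finset

theorem MeasureTheory.condExp_mul_add_le {Ω : Type*} {m m0 : MeasurableSpace Ω} {μ : Measure Ω}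
    (hm : m ≤ m0) [SigmaFinite (μ.trim hm)] {f g X h : Ω → ℝ} (hf : StronglyMeasurable[m] f)
    (hf₀ : 0 ≤ f) (hg : StronglyMeasurable[m] g) (hX : Integrable X μ)
    (hfX : Integrable (f * X) μ) (hg_int : Integrable g μ) (hXh : μ[X|m] ≤ᵐ[μ] h) :
    μ[f * X + g|m] ≤ᵐ[μ] f * h + g := by
  filter_upwards [condExp_add hfX hg_int m, condExp_mul_of_stronglyMeasurable_left hf hfX hX, hXh]
    with ω h_add h_mul h_le
  rw [h_add, Pi.add_apply, h_mul, condExp_of_stronglyMeasurable hm hg hg_int]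
  simp only [Pi.mul_apply, Pi.add_apply]
  gcongr
  exact hf₀ ω

theorem MeasureTheory.Supermartingale.exists_ae_tendsto_of_forall_le {Ω : Type*}
    {m0 : MeasurableSpace Ω} {μ : Measure Ω} [IsFiniteMeasure μ] {ℱ : Filtration ℕ m0}
    {f : ℕ → Ω → ℝ} (hf : Supermartingale f ℱ μ) {c : ℝ} (hc : ∀ n ω, c ≤ f n ω) :
    ∀ᵐ ω ∂μ, ∃ l, Tendsto (fun n => f n ω) atTop (𝓝 l) := by
  have hnorm : ∀ n ω, ‖f n ω‖ ≤ f n ω + 2 * |c| := fun n ω => by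
    rw [Real.norm_eq_abs, abs_le]
    constructor <;> linarith [hc n ω, neg_abs_le c, le_abs_self c, abs_nonneg c]
  have hmean : ∀ n, ∫ ω, f n ω ∂μ ≤ ∫ ω, f 0 ω ∂μ := fun n => by
    simpa using hf.setIntegral_le (Nat.zero_le n) MeasurableSet.univ
  have hbdd : ∀ n, eLpNorm ((-f) n) 1 μ
      ≤ (∫ ω, f 0 ω ∂μ + μ.real Set.univ * (2 * |c|)).toNNReal := fun n => by
    rw [Pi.neg_apply, eLpNorm_neg, eLpNorm_one_eq_lintegral_enorm,
      ← ofReal_integral_norm_eq_lintegral_enorm (hf.integrable n)]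
    refine ENNReal.ofReal_le_ofReal <| (integral_mono (hf.integrable n).norm
      ((hf.integrable n).add (integrable_const _)) (hnorm n)).trans ?_
    rw [integral_add' (hf.integrable n) (integrable_const _), integral_const, smul_eq_mul]
    linarith [hmean n]
  filter_upwards [hf.neg.exists_ae_tendsto_of_bdd hbdd] with ω ⟨l, hl⟩
  exact ⟨-l, by simpa using hl.neg⟩

theorem summable_and_tendsto_of_tendsto_add_sum {a b : ℕ → ℝ} {c : ℝ}
    (ha : ∀ t, 0 ≤ a t) (hb : ∀ s, 0 ≤ b s)
    (h : Tendsto (fun t => a t + ∑ s ∈ range t, b s) atTop (𝓝 c)) :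
    Summable b ∧ Tendsto a atTop (𝓝 (c - ∑' s, b s)) := by
  obtain ⟨B, hB⟩ := h.bddAbove_range
  have hb_sum : Summable b := summable_of_sum_range_le hb fun t =>
    (le_add_of_nonneg_left (ha t)).trans (hB ⟨t, rfl⟩)
  refine ⟨hb_sum, (h.sub hb_sum.hasSum.tendsto_sum_nat).congr fun t => ?_⟩
  ring

namespace RobbinsSiegmund

def normalizer (η : ℕ → ℝ) (t : ℕ) : ℝ := ∏ s ∈ range t, (1 + η s)

section Normalizer

variable {η : ℕ → ℝ}

lemma normalizer_zero : normalizer η 0 = 1 := prod_range_zero _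

lemma normalizer_succ (t : ℕ) : normalizer η (t + 1) = normalizer η t * (1 + η t) :=
  prod_range_succ _ _

lemma one_le_normalizer (hη : ∀ s, 0 ≤ η s) (t : ℕ) : 1 ≤ normalizer η t :=
  one_le_prod fun s _ => le_add_of_nonneg_right (hη s)

lemma normalizer_pos (hη : ∀ s, 0 ≤ η s) (t : ℕ) : 0 < normalizer η t :=
  one_pos.trans_le (one_le_normalizer hη t)

lemma monotone_normalizer (hη : ∀ s, 0 ≤ η s) : Monotone (normalizer η) :=
  monotone_nat_of_le_succ fun t => by
    rw [normalizer_succ]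
    exact le_mul_of_one_le_right (normalizer_pos hη t).le (le_add_of_nonneg_right (hη t))

lemma normalizer_le_exp_tsum (hη : ∀ s, 0 ≤ η s) (hη_sum : Summable η) (t : ℕ) :
    normalizer η t ≤ Real.exp (∑' s, η s) :=
  (Real.prod_one_add_le_exp_sum _ hη).trans <|
    Real.exp_le_exp.2 (hη_sum.sum_le_tsum _ fun s _ => hη s)

lemma exists_tendsto_normalizer (hη : ∀ s, 0 ≤ η s) (hη_sum : Summable η) :
    ∃ P, Tendsto (normalizer η) atTop (𝓝 P) :=
  ⟨_, tendsto_atTop_ciSup (monotone_normalizer hη)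
    ⟨_, Set.forall_mem_range.2 (normalizer_le_exp_tsum hη hη_sum)⟩⟩

end Normalizer

noncomputable def compensated (z η γ ψ : ℕ → ℝ) (t : ℕ) : ℝ :=
  z t / normalizer η t + ∑ s ∈ range t, (ψ s - γ s) / normalizer η (s + 1)

/-- For `a ≥ 0`, the indicator of `s < τ` where `τ` is the first time the partial sums of `a`
exceed `N`; it depends only on `a 0, …, a s`, so it may weight the increment from `s` to `s + 1`. -/
noncomputable def withinBudget (a : ℕ → ℝ) (N : ℝ) (s : ℕ) : ℝ :=
  if ∑ u ∈ range (s + 1), a u ≤ N then 1 else 0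

/-- The compensated process frozen once `∑ (η + γ)` exceeds `N`. It is written as a transform of
the increments because `compensated` itself need not be integrable. -/
noncomputable def stopped (z η γ ψ : ℕ → ℝ) (N : ℝ) (t : ℕ) : ℝ :=
  z 0 + ∑ s ∈ range t, withinBudget (η + γ) N s *
    (compensated z η γ ψ (s + 1) - compensated z η γ ψ s)

/-- `stopped (t + 1) = stepWeight t * z (t + 1) + (stopped t + stepOffset t)`, with both
coefficients known at time `t`: the form in which the bound on `E[z (t + 1) | F t]` applies. -/
noncomputable def stepWeight (η γ : ℕ → ℝ) (N : ℝ) (t : ℕ) : ℝ :=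
  withinBudget (η + γ) N t / normalizer η (t + 1)

noncomputable def stepOffset (z η γ ψ : ℕ → ℝ) (N : ℝ) (t : ℕ) : ℝ :=
  withinBudget (η + γ) N t * ((ψ t - γ t) / normalizer η (t + 1) - z t / normalizer η t)

section Deterministic

variable {z η γ ψ : ℕ → ℝ}

lemma compensated_zero : compensated z η γ ψ 0 = z 0 := by
  simp [compensated, normalizer_zero]

lemma compensated_succ_sub (t : ℕ) :
    compensated z η γ ψ (t + 1) - compensated z η γ ψ t =
      z (t + 1) / normalizer η (t + 1) - z t / normalizer η t
        + (ψ t - γ t) / normalizer η (t + 1) := by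
  simp only [compensated, sum_range_succ]
  ring

lemma neg_sum_le_compensated (hz : ∀ t, 0 ≤ z t) (hη : ∀ s, 0 ≤ η s) (hγ : ∀ s, 0 ≤ γ s)
    (hψ : ∀ s, 0 ≤ ψ s) (t : ℕ) : -∑ s ∈ range t, γ s ≤ compensated z η γ ψ t := by
  have hterm : ∀ s ∈ range t, -γ s ≤ (ψ s - γ s) / normalizer η (s + 1) := fun s _ => by
    rw [le_div_iff₀ (normalizer_pos hη _)]
    nlinarith [one_le_normalizer hη (s + 1), hγ s, hψ s]
  have := div_nonneg (hz t) (normalizer_pos hη t).le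
  rw [← sum_neg_distrib]
  exact (sum_le_sum hterm).trans (le_add_of_nonneg_left this)

section Budget

variable {a : ℕ → ℝ} {N : ℝ}

lemma withinBudget_nonneg (s : ℕ) : 0 ≤ withinBudget a N s := by
  unfold withinBudget; split_ifs <;> norm_num

lemma withinBudget_le_one (s : ℕ) : withinBudget a N s ≤ 1 := by
  unfold withinBudget; split_ifs <;> norm_num

lemma withinBudget_mul_le (ha : ∀ u, 0 ≤ a u) (hN : 0 ≤ N) (s : ℕ) :
    withinBudget a N s * a s ≤ N := by
  unfold withinBudget
  split_ifs with h
  · exact (one_mul (a s)).trans_le <|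
      (single_le_sum (fun u _ => ha u) (self_mem_range_succ s)).trans h
  · simpa using hN

lemma withinBudget_eq_one (ha : ∀ u, 0 ≤ a u) {s t : ℕ} (hst : s < t)
    (h : ∑ u ∈ range t, a u ≤ N) : withinBudget a N s = 1 :=
  if_pos <| (sum_le_sum_of_subset_of_nonneg (range_subset_range.2 hst)
    fun u _ _ => ha u).trans h

end Budget

lemma stopped_eq_compensated (hη : ∀ s, 0 ≤ η s) (hγ : ∀ s, 0 ≤ γ s) {N : ℝ} {t : ℕ}
    (h : ∑ u ∈ range t, (η u + γ u) ≤ N) : stopped z η γ ψ N t = compensated z η γ ψ t := by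
  have hC : ∀ s ∈ range t, withinBudget (η + γ) N s = 1 := fun s hs =>
    withinBudget_eq_one (fun u => add_nonneg (hη u) (hγ u)) (mem_range.1 hs) h
  rw [stopped, sum_congr rfl fun s hs => by rw [hC s hs, one_mul], sum_range_sub,
    compensated_zero]
  ring

lemma stopped_succ (N : ℝ) (t : ℕ) :
    stopped z η γ ψ N (t + 1) = stopped z η γ ψ N t
      + withinBudget (η + γ) N t * (compensated z η γ ψ (t + 1) - compensated z η γ ψ t) := by
  simp only [stopped, sum_range_succ]
  ring

lemma stopped_succ_eq_mul_add (N : ℝ) (t : ℕ) :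
    stopped z η γ ψ N (t + 1)
      = stepWeight η γ N t * z (t + 1) + (stopped z η γ ψ N t + stepOffset z η γ ψ N t) := by
  rw [stopped_succ, compensated_succ_sub, stepWeight, stepOffset]
  ring

lemma stepWeight_nonneg (hη : ∀ s, 0 ≤ η s) (N : ℝ) (t : ℕ) : 0 ≤ stepWeight η γ N t :=
  div_nonneg (withinBudget_nonneg t) (normalizer_pos hη _).le

lemma stepWeight_le_one (hη : ∀ s, 0 ≤ η s) (N : ℝ) (t : ℕ) : stepWeight η γ N t ≤ 1 :=
  (div_le_self (withinBudget_nonneg t) (one_le_normalizer hη _)).trans (withinBudget_le_one t)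

lemma stepWeight_mul_add_stepOffset (hη : ∀ s, 0 ≤ η s) (N : ℝ) (t : ℕ) :
    stepWeight η γ N t * ((1 + η t) * z t + γ t - ψ t) + stepOffset z η γ ψ N t = 0 := by
  have hP := (normalizer_pos hη t).ne'
  have hη₁ : 1 + η t ≠ 0 := by linarith [hη t]
  rw [stepWeight, stepOffset, normalizer_succ]
  field_simp
  ring

lemma neg_le_stopped (hz : ∀ t, 0 ≤ z t) (hη : ∀ s, 0 ≤ η s) (hγ : ∀ s, 0 ≤ γ s)
    (hψ : ∀ s, 0 ≤ ψ s) {N : ℝ} (hN : 0 ≤ N) (t : ℕ) : -N ≤ stopped z η γ ψ N t := by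
  induction t with
  | zero => simpa [stopped] using (neg_nonpos.2 hN).trans (hz 0)
  | succ t ih =>
    by_cases h : ∑ u ∈ range (t + 1), (η u + γ u) ≤ N
    · rw [stopped_eq_compensated hη hγ h]
      refine le_trans ?_ (neg_sum_le_compensated hz hη hγ hψ _)
      exact neg_le_neg <| (sum_le_sum fun u _ => le_add_of_nonneg_left (hη u)).trans h
    · have hC : withinBudget (η + γ) N t = 0 := if_neg h
      rwa [stopped_succ, hC, zero_mul, add_zero]

lemma abs_stepOffset_le (hz : ∀ t, 0 ≤ z t) (hη : ∀ s, 0 ≤ η s) (hγ : ∀ s, 0 ≤ γ s)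
    (hψ : ∀ s, 0 ≤ ψ s) {N : ℝ} (hN : 0 ≤ N) {t : ℕ} (hψt : ψ t ≤ (1 + η t) * z t + γ t) :
    |stepOffset z η γ ψ N t| ≤ (2 + N) * z t + 2 * N := by
  rw [stepOffset]
  set C := withinBudget (η + γ) N t
  have hC₀ : 0 ≤ C := withinBudget_nonneg t
  have hC₁ : C ≤ 1 := withinBudget_le_one t
  have hCN : C * (η t + γ t) ≤ N := withinBudget_mul_le (fun u => add_nonneg (hη u) (hγ u)) hN t
  have hP₁ := one_le_normalizer hη (t + 1)
  have hP₀ := one_le_normalizer hη t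
  have hψγ : |(ψ t - γ t) / normalizer η (t + 1)| ≤ ψ t + γ t := by
    rw [abs_div, abs_of_pos (normalizer_pos hη (t + 1))]
    exact (div_le_self (abs_nonneg _) hP₁).trans
      (abs_le.2 ⟨by linarith [hψ t], by linarith [hγ t]⟩)
  have hzP : |z t / normalizer η t| ≤ z t := by
    rw [abs_of_nonneg (div_nonneg (hz t) (by linarith))]
    exact div_le_self (hz t) hP₀
  rw [abs_mul, abs_of_nonneg hC₀]
  calc C * |(ψ t - γ t) / normalizer η (t + 1) - z t / normalizer η t|
      ≤ C * (ψ t + γ t + z t) :=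
        mul_le_mul_of_nonneg_left ((abs_sub _ _).trans (add_le_add hψγ hzP)) hC₀
    _ ≤ (2 + N) * z t + 2 * N := by
        nlinarith [mul_le_mul_of_nonneg_left hψt hC₀, mul_nonneg hC₀ (hγ t),
          mul_nonneg hC₀ (hη t), mul_nonneg (sub_nonneg.2 hC₁) (hz t), hz t]

lemma tendsto_and_summable_of_tendsto_compensated (hz : ∀ t, 0 ≤ z t) (hη : ∀ s, 0 ≤ η s)
    (hγ : ∀ s, 0 ≤ γ s) (hψ : ∀ s, 0 ≤ ψ s) (hη_sum : Summable η) (hγ_sum : Summable γ) {c : ℝ}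
    (h : Tendsto (compensated z η γ ψ) atTop (𝓝 c)) :
    (∃ l, Tendsto z atTop (𝓝 l)) ∧ Summable ψ := by
  obtain ⟨P, hP⟩ := exists_tendsto_normalizer hη hη_sum
  have hPpos := normalizer_pos hη
  have hγP : Summable fun s => γ s / normalizer η (s + 1) :=
    hγ_sum.of_nonneg_of_le (fun s => div_nonneg (hγ s) (hPpos _).le)
      fun s => div_le_self (hγ s) (one_le_normalizer hη _)
  have hsplit : Tendsto (fun t => z t / normalizer η t + ∑ s ∈ range t, ψ s / normalizer η (s + 1))
      atTop (𝓝 (c + ∑' s, γ s / normalizer η (s + 1))) := by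
    refine (h.add hγP.hasSum.tendsto_sum_nat).congr fun t => ?_
    simp only [compensated, add_assoc, ← sum_add_distrib, sub_div, sub_add_cancel]
  obtain ⟨hψP, hzP⟩ := summable_and_tendsto_of_tendsto_add_sum
    (fun t => div_nonneg (hz t) (hPpos t).le) (fun s => div_nonneg (hψ s) (hPpos _).le) hsplit
  refine ⟨⟨_, (hzP.mul hP).congr fun t => div_mul_cancel₀ _ (hPpos t).ne'⟩, ?_⟩
  refine (hψP.mul_right (Real.exp (∑' s, η s))).of_nonneg_of_le hψ fun s => ?_
  calc ψ s = ψ s / normalizer η (s + 1) * normalizer η (s + 1) :=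
        (div_mul_cancel₀ _ (hPpos _).ne').symm
    _ ≤ ψ s / normalizer η (s + 1) * Real.exp (∑' s, η s) :=
        mul_le_mul_of_nonneg_left (normalizer_le_exp_tsum hη hη_sum _)
          (div_nonneg (hψ s) (hPpos _).le)

end Deterministic

section Measurability

variable {Ω : Type*} {m0 : MeasurableSpace Ω} {F : Filtration ℕ m0} {z η γ ψ : ℕ → Ω → ℝ}

lemma measurable_normalizer (hη : Adapted F η) {s t : ℕ} (hts : t ≤ s + 1) :
    Measurable[F s] fun ω => normalizer (η · ω) t :=
  Finset.measurable_prod _ fun u hu =>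
    measurable_const.add (hη.measurable_le (by rw [mem_range] at hu; omega))

lemma measurable_withinBudget (hη : Adapted F η) (hγ : Adapted F γ) (N : ℝ) (s : ℕ) :
    Measurable[F s] fun ω => withinBudget ((η · ω) + (γ · ω)) N s := by
  refine Measurable.ite (measurableSet_le (Finset.measurable_sum _ fun u hu => ?_)
    measurable_const) measurable_const measurable_const
  have hus : u ≤ s := Nat.lt_succ_iff.1 (mem_range.1 hu)
  exact (hη.measurable_le hus).add (hγ.measurable_le hus)

lemma adapted_compensated (hz : Adapted F z) (hη : Adapted F η) (hγ : Adapted F γ)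
    (hψ : Adapted F ψ) :
    Adapted F fun t ω => compensated (z · ω) (η · ω) (γ · ω) (ψ · ω) t := fun t =>
  ((hz t).div (measurable_normalizer hη (Nat.le_succ t))).add <|
    Finset.measurable_sum _ fun s hs => by
      have hst : s + 1 ≤ t := mem_range.1 hs
      exact ((hψ.measurable_le (by omega)).sub (hγ.measurable_le (by omega))).div
        (measurable_normalizer hη (by omega))

lemma adapted_stopped (hz : Adapted F z) (hη : Adapted F η) (hγ : Adapted F γ)
    (hψ : Adapted F ψ) (N : ℝ) :
    Adapted F fun t ω => stopped (z · ω) (η · ω) (γ · ω) (ψ · ω) N t := fun t =>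
  (hz.measurable_le (Nat.zero_le t)).add <| Finset.measurable_sum _ fun s hs => by
    have hst : s + 1 ≤ t := mem_range.1 hs
    have hX := adapted_compensated hz hη hγ hψ
    exact ((measurable_withinBudget hη hγ N s).mono (F.mono (by omega)) le_rfl).mul
      ((hX.measurable_le hst).sub (hX.measurable_le (by omega)))

lemma measurable_stepWeight (hη : Adapted F η) (hγ : Adapted F γ) (N : ℝ) (t : ℕ) :
    Measurable[F t] fun ω => stepWeight (η · ω) (γ · ω) N t :=
  (measurable_withinBudget hη hγ N t).div (measurable_normalizer hη le_rfl)

lemma measurable_stepOffset (hz : Adapted F z) (hη : Adapted F η) (hγ : Adapted F γ)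
    (hψ : Adapted F ψ) (N : ℝ) (t : ℕ) :
    Measurable[F t] fun ω => stepOffset (z · ω) (η · ω) (γ · ω) (ψ · ω) N t :=
  (measurable_withinBudget hη hγ N t).mul <|
    (((hψ t).sub (hγ t)).div (measurable_normalizer hη le_rfl)).sub
      ((hz t).div (measurable_normalizer hη (Nat.le_succ t)))

end Measurability

section Supermartingale

variable {Ω : Type*} {m0 : MeasurableSpace Ω} {μ : Measure Ω} {F : Filtration ℕ m0}
  {z η γ ψ : ℕ → Ω → ℝ}

lemma ae_le_of_condExp_le (hz : ∀ t ω, 0 ≤ z t ω)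
    (hineq : ∀ t, μ[z (t + 1)|F t] ≤ᵐ[μ] fun ω => (1 + η t ω) * z t ω + γ t ω - ψ t ω)
    (t : ℕ) : ∀ᵐ ω ∂μ, ψ t ω ≤ (1 + η t ω) * z t ω + γ t ω := by
  filter_upwards [condExp_nonneg (μ := μ) (m := F t) (ae_of_all _ (hz (t + 1))), hineq t]
    with ω h_nonneg h_le
  linarith [show (0 : ℝ) ≤ (μ[z (t + 1)|F t]) ω from h_nonneg]

lemma integrable_stepWeight_mul (hz : Adapted F z) (hη : Adapted F η) (hγ : Adapted F γ)
    (hz_nonneg : ∀ t ω, 0 ≤ z t ω) (hη_nonneg : ∀ t ω, 0 ≤ η t ω)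
    (hz_int : ∀ t, Integrable (z t) μ) (N : ℝ) (t : ℕ) :
    Integrable (fun ω => stepWeight (η · ω) (γ · ω) N t * z (t + 1) ω) μ := by
  refine (hz_int (t + 1)).mono' ?_ (ae_of_all _ fun ω => ?_)
  · exact (((measurable_stepWeight hη hγ N t).mono (F.le t) le_rfl).mul
      (hz.measurable (i := t + 1))).aestronglyMeasurable
  · rw [Real.norm_eq_abs, abs_of_nonneg (mul_nonneg
      (stepWeight_nonneg (hη_nonneg · ω) N t) (hz_nonneg _ ω))]
    exact mul_le_of_le_one_left (hz_nonneg _ ω) (stepWeight_le_one (hη_nonneg · ω) N t)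

lemma integrable_stepOffset [IsFiniteMeasure μ] (hz : Adapted F z) (hη : Adapted F η)
    (hγ : Adapted F γ) (hψ : Adapted F ψ) (hz_nonneg : ∀ t ω, 0 ≤ z t ω) (hη_nonneg : ∀ t ω, 0 ≤ η t ω)
    (hγ_nonneg : ∀ t ω, 0 ≤ γ t ω) (hψ_nonneg : ∀ t ω, 0 ≤ ψ t ω)
    (hz_int : ∀ t, Integrable (z t) μ)
    (hψ_le : ∀ t, ∀ᵐ ω ∂μ, ψ t ω ≤ (1 + η t ω) * z t ω + γ t ω) {N : ℝ} (hN : 0 ≤ N)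
    (t : ℕ) : Integrable (fun ω => stepOffset (z · ω) (η · ω) (γ · ω) (ψ · ω) N t) μ := by
  refine (((hz_int t).const_mul (2 + N)).add (integrable_const (2 * N))).mono'
    ((measurable_stepOffset hz hη hγ hψ N t).mono (F.le t) le_rfl).aestronglyMeasurable ?_
  filter_upwards [hψ_le t] with ω hψt
  exact abs_stepOffset_le (hz_nonneg · ω) (hη_nonneg · ω) (hγ_nonneg · ω) (hψ_nonneg · ω) hN hψt

theorem supermartingale_stopped [IsFiniteMeasure μ] (hz : Adapted F z) (hη : Adapted F η)
    (hγ : Adapted F γ) (hψ : Adapted F ψ) (hz_nonneg : ∀ t ω, 0 ≤ z t ω)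
    (hη_nonneg : ∀ t ω, 0 ≤ η t ω) (hγ_nonneg : ∀ t ω, 0 ≤ γ t ω)
    (hψ_nonneg : ∀ t ω, 0 ≤ ψ t ω) (hz_int : ∀ t, Integrable (z t) μ)
    (hineq : ∀ t, μ[z (t + 1)|F t] ≤ᵐ[μ] fun ω => (1 + η t ω) * z t ω + γ t ω - ψ t ω)
    {N : ℝ} (hN : 0 ≤ N) :
    Supermartingale (fun t ω => stopped (z · ω) (η · ω) (γ · ω) (ψ · ω) N t) F μ := by
  set Y := fun t ω => stopped (z · ω) (η · ω) (γ · ω) (ψ · ω) N t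
  set w := fun t ω => stepWeight (η · ω) (γ · ω) N t
  set o := fun t ω => stepOffset (z · ω) (η · ω) (γ · ω) (ψ · ω) N t
  have hY_succ : ∀ t, Y (t + 1) = w t * z (t + 1) + (Y t + o t) := fun t =>
    funext fun ω => stopped_succ_eq_mul_add N t
  have hwz_int := integrable_stepWeight_mul (μ := μ) hz hη hγ hz_nonneg hη_nonneg hz_int N
  have ho_int := integrable_stepOffset hz hη hγ hψ hz_nonneg hη_nonneg hγ_nonneg hψ_nonneg
    hz_int (ae_le_of_condExp_le hz_nonneg hineq) hN
  have hY_int : ∀ t, Integrable (Y t) μ := by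
    intro t
    induction t with
    | zero => simpa [Y, stopped] using hz_int 0
    | succ t ih => rw [hY_succ]; exact (hwz_int t).add (ih.add (ho_int t))
  have hY_adapted := adapted_stopped hz hη hγ hψ N
  refine supermartingale_nat hY_adapted.stronglyAdapted hY_int fun t => ?_
  rw [hY_succ]
  refine (condExp_mul_add_le (F.le t) (measurable_stepWeight hη hγ N t).stronglyMeasurable
    (fun ω => stepWeight_nonneg (hη_nonneg · ω) N t)
    ((hY_adapted t).add (measurable_stepOffset hz hη hγ hψ N t)).stronglyMeasurable
    (hz_int _) (hwz_int t) ((hY_int t).add (ho_int t)) (hineq t)).trans (ae_of_all _ fun ω => ?_)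
  have hdrift := stepWeight_mul_add_stepOffset (z := (z · ω)) (γ := (γ · ω)) (ψ := (ψ · ω))
    (hη_nonneg · ω) N t
  simp only [Pi.add_apply, Pi.mul_apply]
  linarith

end Supermartingale

end RobbinsSiegmund

open RobbinsSiegmund

theorem stmt_2 {Ω : Type*} {m0 : MeasurableSpace Ω} {μ : Measure Ω}
    [IsProbabilityMeasure μ] (F : Filtration ℕ m0)
    (z η γ ψ : ℕ → Ω → ℝ)
    (hz_adapted : Adapted F z) (hη_adapted : Adapted F η)
    (hγ_adapted : Adapted F γ) (hψ_adapted : Adapted F ψ)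
    (hz_nonneg : ∀ t ω, 0 ≤ z t ω) (hη_nonneg : ∀ t ω, 0 ≤ η t ω)
    (hγ_nonneg : ∀ t ω, 0 ≤ γ t ω) (hψ_nonneg : ∀ t ω, 0 ≤ ψ t ω)
    (hz_int : ∀ t, Integrable (z t) μ)
    (hineq : ∀ t, μ[z (t + 1) | F t] ≤ᵐ[μ]
        fun ω => (1 + η t ω) * z t ω + γ t ω - ψ t ω) :
    ∀ᵐ ω ∂μ, (Summable (fun t => η t ω) ∧ Summable (fun t => γ t ω)) →
      (∃ c : ℝ, Tendsto (fun t => z t ω) atTop (nhds c)) ∧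
        Summable (fun t => ψ t ω) := by
  have hconv : ∀ᵐ ω ∂μ, ∀ N : ℕ, ∃ c,
      Tendsto (fun t => stopped (z · ω) (η · ω) (γ · ω) (ψ · ω) N t) atTop (𝓝 c) :=
    ae_all_iff.2 fun N =>
      (supermartingale_stopped hz_adapted hη_adapted hγ_adapted hψ_adapted hz_nonneg hη_nonneg
        hγ_nonneg hψ_nonneg hz_int hineq N.cast_nonneg).exists_ae_tendsto_of_forall_le
      fun t ω => neg_le_stopped (hz_nonneg · ω) (hη_nonneg · ω) (hγ_nonneg · ω)
        (hψ_nonneg · ω) N.cast_nonneg t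
  filter_upwards [hconv] with ω hω ⟨hη_sum, hγ_sum⟩
  set N := ⌈∑' t, (η t ω + γ t ω)⌉₊
  have hbudget : ∀ t, ∑ u ∈ Finset.range t, (η u ω + γ u ω) ≤ N := fun t =>
    ((hη_sum.add hγ_sum).sum_le_tsum _ fun u _ => add_nonneg (hη_nonneg u ω) (hγ_nonneg u ω)).trans
      (Nat.le_ceil _)
  obtain ⟨c, hc⟩ := hω N
  exact tendsto_and_summable_of_tendsto_compensated (hz_nonneg · ω) (hη_nonneg · ω)
    (hγ_nonneg · ω) (hψ_nonneg · ω) hη_sum hγ_sum <|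
    hc.congr fun t => stopped_eq_compensated (hη_nonneg · ω) (hγ_nonneg · ω) (hbudget t)
end

section
/- (Gladyshev, boundedness part) Let f: ℝ^d → ℝ^d satisfy f(θ*) = 0, ‖f(θ)‖ ≤ K‖θ−θ*‖ for all θ, and ⟨θ−θ*, f(θ)⟩ ≤ 0 for all θ. Let θ_{t+1} = θ_t + α_t(f(θ_t) + ξ_{t+1}) with α_t ∈ (0,1), ∑_t α_t² < ∞, and noise satisfying E[ξ_{t+1}|F_t] = 0 and E[‖ξ_{t+1}‖²|F_t] ≤ σ²(1+‖θ_t−θ*‖²) a.s. Then the sequence (θ_t) is bounded almost surely: P(sup_t ‖θ_t‖ < ∞) = 1. -/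
/-!
Write `z t = ‖θ t - θstar‖ ^ 2`. Expanding the square in the recursion, passivity kills the drift
term, the cross term `⟪θ t - θstar, ξ (t + 1)⟫` has conditional mean zero, and the remaining terms
are `O(α t ^ 2)`, so `E[z (t + 1) | F t] ≤ (1 + c α t ^ 2) z t + 2 σ ^ 2 α t ^ 2` with
`c = 2 K ^ 2 + 2 σ ^ 2`. Then `z t / ∏_{s < t} (1 + c α s ^ 2) + ∑_{s ≥ t} 2 σ ^ 2 α s ^ 2` is a
nonnegative supermartingale (Robbins–Siegmund), so it converges almost surely, and the product is
at most `exp (c ∑ α ^ 2)`.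
For the conditional expectations to make sense `z t` must be integrable; this is arranged by
freezing the iterates at `θstar` and switching off the noise outside the `F 0`-event
`‖θ 0 - θstar‖ ≤ n`, which preserves all the hypotheses.
-/

open MeasureTheory Filter

section RobbinsSiegmund

variable {Ω : Type*} {m0 : MeasurableSpace Ω} {μ : Measure Ω} {F : Filtration ℕ m0}

theorem MeasureTheory.Supermartingale.ae_bddAbove_of_nonneg [IsFiniteMeasure μ]
    {M : ℕ → Ω → ℝ} (hM : Supermartingale M F μ) (hM_nonneg : ∀ t, 0 ≤ᵐ[μ] M t) :
    ∀ᵐ ω ∂μ, BddAbove (Set.range fun t => M t ω) := by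
  have hL1 : ∀ t, eLpNorm ((-M) t) 1 μ ≤ (∫ ω, M 0 ω ∂μ).toNNReal := by
    intro t
    have hint : ∫ ω, M t ω ∂μ ≤ ∫ ω, M 0 ω ∂μ := by
      simpa using hM.setIntegral_le (Nat.zero_le t) MeasurableSet.univ
    rw [Pi.neg_apply, eLpNorm_neg, eLpNorm_one_eq_lintegral_enorm, ENNReal.ofNNReal_toNNReal,
      ← ofReal_integral_norm_eq_lintegral_enorm (hM.integrable t),
      integral_congr_ae ((hM_nonneg t).mono fun ω hω => Real.norm_of_nonneg hω)]
    exact ENNReal.ofReal_le_ofReal hint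
  filter_upwards [hM.neg.exists_ae_tendsto_of_bdd hL1] with ω ⟨c, hc⟩
  simpa using hc.neg.bddAbove_range

theorem supermartingale_inv_prod_mul_add_tail [IsFiniteMeasure μ] {W : ℕ → Ω → ℝ} {a b : ℕ → ℝ}
    (hW : Adapted F W) (hW_int : ∀ t, Integrable (W t) μ) (ha : ∀ t, 0 ≤ a t)
    (hb : ∀ t, 0 ≤ b t) (hstep : ∀ t, μ[W (t + 1) | F t] ≤ᵐ[μ] fun ω => (1 + a t) * W t ω + b t) :
    Supermartingale (fun t ω => (∏ s ∈ Finset.range t, (1 + a s))⁻¹ * W t ω +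
      (∑' s, b s - ∑ s ∈ Finset.range t, b s)) F μ := by
  set P : ℕ → ℝ := fun t => ∏ s ∈ Finset.range t, (1 + a s)
  have hP_one : ∀ t, 1 ≤ P t := fun t =>
    Finset.one_le_prod fun s _ => le_add_of_nonneg_right (ha s)
  have hP_succ : ∀ t, (P (t + 1))⁻¹ * (1 + a t) = (P t)⁻¹ := fun t => by
    simp only [P, Finset.prod_range_succ]
    field_simp [(zero_lt_one.trans_le (hP_one t)).ne', (by linarith [ha t] : (1 + a t) ≠ 0)]
  set c : ℕ → ℝ := fun t => ∑' s, b s - ∑ s ∈ Finset.range t, b s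
  have hc_succ : ∀ t, c t = b t + c (t + 1) := fun t => by
    simp only [c, Finset.sum_range_succ]; ring
  refine supermartingale_nat (fun t => ?_) (fun t => ((hW_int t).const_mul _).add
    (integrable_const _)) fun t => ?_
  · exact (((hW t).const_mul _).add_const _).stronglyMeasurable
  have hcond : μ[fun ω => (P (t + 1))⁻¹ * W (t + 1) ω + c (t + 1) | F t]
      =ᵐ[μ] fun ω => (P (t + 1))⁻¹ * μ[W (t + 1) | F t] ω + c (t + 1) := by
    filter_upwards [condExp_add ((hW_int (t + 1)).const_mul (P (t + 1))⁻¹)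
      (integrable_const (c (t + 1))) (F t),
      condExp_smul (P (t + 1))⁻¹ (W (t + 1)) (F t)] with ω h_add h_smul
    rw [Pi.add_apply, condExp_const (F.le t)] at h_add
    exact h_add.trans (congrArg (· + _) h_smul)
  have h_inv_le : (P (t + 1))⁻¹ * b t ≤ b t :=
    mul_le_of_le_one_left (hb t) (inv_le_one_of_one_le₀ (hP_one _))
  filter_upwards [hcond, hstep t] with ω hω h_step
  calc μ[fun ω => (P (t + 1))⁻¹ * W (t + 1) ω + c (t + 1) | F t] ω
      ≤ (P (t + 1))⁻¹ * ((1 + a t) * W t ω + b t) + c (t + 1) := by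
        rw [hω]
        gcongr
        exact inv_nonneg.2 (zero_le_one.trans (hP_one _))
    _ = (P t)⁻¹ * W t ω + (P (t + 1))⁻¹ * b t + c (t + 1) := by rw [← hP_succ t]; ring
    _ ≤ (P t)⁻¹ * W t ω + c t := by linarith [hc_succ t]

theorem ae_bddAbove_of_condExp_le_one_add_mul_add [IsFiniteMeasure μ] {W : ℕ → Ω → ℝ}
    {a b : ℕ → ℝ} (hW : Adapted F W) (hW_int : ∀ t, Integrable (W t) μ)
    (hW_nonneg : ∀ t, 0 ≤ᵐ[μ] W t) (ha : ∀ t, 0 ≤ a t) (ha_sum : Summable a)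
    (hb : ∀ t, 0 ≤ b t) (hb_sum : Summable b)
    (hstep : ∀ t, μ[W (t + 1) | F t] ≤ᵐ[μ] fun ω => (1 + a t) * W t ω + b t) :
    ∀ᵐ ω ∂μ, BddAbove (Set.range fun t => W t ω) := by
  have h_tail : ∀ t, 0 ≤ ∑' s, b s - ∑ s ∈ Finset.range t, b s := fun t =>
    sub_nonneg.2 (hb_sum.sum_le_tsum _ fun s _ => hb s)
  have h_prod : ∀ t, 0 < ∏ s ∈ Finset.range t, (1 + a s) ∧
      ∏ s ∈ Finset.range t, (1 + a s) ≤ Real.exp (∑' s, a s) := fun t =>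
    ⟨Finset.prod_pos fun s _ => by linarith [ha s], (Real.prod_one_add_le_exp_sum _ ha).trans
      (Real.exp_le_exp.2 (ha_sum.sum_le_tsum _ fun s _ => ha s))⟩
  have hM := supermartingale_inv_prod_mul_add_tail hW hW_int ha hb hstep
  have hM_nonneg : ∀ t, 0 ≤ᵐ[μ] fun ω => (∏ s ∈ Finset.range t, (1 + a s))⁻¹ * W t ω +
      (∑' s, b s - ∑ s ∈ Finset.range t, b s) := fun t => by
    filter_upwards [hW_nonneg t] with ω hω
    exact add_nonneg (mul_nonneg (inv_nonneg.2 (h_prod t).1.le) hω) (h_tail t)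
  filter_upwards [hM.ae_bddAbove_of_nonneg hM_nonneg, ae_all_iff.2 hW_nonneg]
    with ω ⟨B, hB⟩ hω
  refine ⟨Real.exp (∑' s, a s) * B, Set.forall_mem_range.2 fun t => ?_⟩
  have hMt := hB (Set.mem_range_self t)
  have hP := h_prod t
  have hW_le : (∏ s ∈ Finset.range t, (1 + a s))⁻¹ * W t ω ≤ B := by linarith [h_tail t]
  calc W t ω = (∏ s ∈ Finset.range t, (1 + a s)) *
        ((∏ s ∈ Finset.range t, (1 + a s))⁻¹ * W t ω) := by field_simp [hP.1.ne']
    _ ≤ Real.exp (∑' s, a s) * B :=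
        mul_le_mul hP.2 hW_le (mul_nonneg (inv_nonneg.2 hP.1.le) (hω t)) (Real.exp_pos _).le

end RobbinsSiegmund

section Gladyshev

variable {E : Type*} [NormedAddCommGroup E] [InnerProductSpace ℝ E]

theorem norm_add_smul_sub_sq_le {f : E → E} {θstar : E} {K a : ℝ}
    (hgrowth : ∀ θ, ‖f θ‖ ≤ K * ‖θ - θstar‖) (hpassive : ∀ θ, inner ℝ (θ - θstar) (f θ) ≤ 0)
    (ha : 0 ≤ a) (x e : E) :
    ‖x + a • (f x + e) - θstar‖ ^ 2 ≤ (1 + 2 * K ^ 2 * a ^ 2) * ‖x - θstar‖ ^ 2 +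
      2 * a * inner ℝ (x - θstar) e + 2 * a ^ 2 * ‖e‖ ^ 2 := by
  have h_sq : ‖f x + e‖ ^ 2 ≤ 2 * (K ^ 2 * ‖x - θstar‖ ^ 2) + 2 * ‖e‖ ^ 2 := by
    have h_f : ‖f x‖ ^ 2 ≤ K ^ 2 * ‖x - θstar‖ ^ 2 := by
      rw [← mul_pow]; exact pow_le_pow_left₀ (norm_nonneg _) (hgrowth x) 2
    nlinarith [norm_add_le (f x) e, norm_nonneg (f x + e), sq_nonneg (‖f x‖ - ‖e‖)]
  have h_inner : a * inner ℝ (x - θstar) (f x) ≤ 0 := mul_nonpos_of_nonneg_of_nonpos ha (hpassive x)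
  rw [show x + a • (f x + e) - θstar = (x - θstar) + a • (f x + e) by abel, norm_add_sq_real,
    real_inner_smul_right, inner_add_right, norm_smul, Real.norm_of_nonneg ha, mul_pow]
  nlinarith [mul_le_mul_of_nonneg_left h_sq (sq_nonneg a)]

variable {Ω : Type*} {m0 : MeasurableSpace Ω} {μ : Measure Ω}
  {f : E → E} {θstar : E} {K : ℝ} {α : ℕ → ℝ} {θ ξ : ℕ → Ω → E}

theorem integrable_inner_of_integrable_norm_sq {g h : Ω → E} (hg : AEStronglyMeasurable g μ)
    (hh : AEStronglyMeasurable h μ) (hg2 : Integrable (fun ω => ‖g ω‖ ^ 2) μ)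
    (hh2 : Integrable (fun ω => ‖h ω‖ ^ 2) μ) :
    Integrable (fun ω => inner ℝ (g ω) (h ω)) μ := by
  refine ((hg2.add hh2).div_const 2).mono' (hg.inner hh) (ae_of_all _ fun ω => ?_)
  rw [Real.norm_eq_abs, Pi.add_apply]
  nlinarith [abs_real_inner_le_norm (g ω) (h ω), sq_nonneg (‖g ω‖ - ‖h ω‖)]

theorem norm_sub_sq_succ_le (hgrowth : ∀ θ, ‖f θ‖ ≤ K * ‖θ - θstar‖)
    (hpassive : ∀ θ, inner ℝ (θ - θstar) (f θ) ≤ 0) (hα : ∀ t, 0 ≤ α t)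
    (hrec : ∀ t ω, θ (t + 1) ω = θ t ω + α t • (f (θ t ω) + ξ (t + 1) ω)) (t : ℕ) :
    (fun ω => ‖θ (t + 1) ω - θstar‖ ^ 2) ≤
      (1 + 2 * K ^ 2 * α t ^ 2) • (fun ω => ‖θ t ω - θstar‖ ^ 2) +
      (2 * α t) • (fun ω => inner ℝ (θ t ω - θstar) (ξ (t + 1) ω)) +
      (2 * α t ^ 2) • fun ω => ‖ξ (t + 1) ω‖ ^ 2 := fun ω => by
  simpa [hrec] using norm_add_smul_sub_sq_le hgrowth hpassive (hα t) (θ t ω) (ξ (t + 1) ω)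

variable [MeasurableSpace E] [BorelSpace E] [SecondCountableTopology E]
  {F : Filtration ℕ m0} {σ : ℝ}

theorem integrable_norm_sub_sq (hgrowth : ∀ θ, ‖f θ‖ ≤ K * ‖θ - θstar‖)
    (hpassive : ∀ θ, inner ℝ (θ - θstar) (f θ) ≤ 0) (hα : ∀ t, 0 ≤ α t)
    (hθ : Adapted F θ) (hrec : ∀ t ω, θ (t + 1) ω = θ t ω + α t • (f (θ t ω) + ξ (t + 1) ω))
    (hθ0 : Integrable (fun ω => ‖θ 0 ω - θstar‖ ^ 2) μ)
    (hξ : ∀ t, AEStronglyMeasurable (ξ (t + 1)) μ)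
    (hξ_sq_int : ∀ t, Integrable (fun ω => ‖ξ (t + 1) ω‖ ^ 2) μ) (t : ℕ) :
    Integrable (fun ω => ‖θ t ω - θstar‖ ^ 2) μ := by
  have hb : ∀ t, AEStronglyMeasurable (fun ω => θ t ω - θstar) μ := fun t =>
    (((hθ t).mono (F.le t) le_rfl).sub_const θstar).aestronglyMeasurable
  induction t with
  | zero => exact hθ0
  | succ t ih =>
    have h_dom := ((ih.const_mul (1 + 2 * K ^ 2 * α t ^ 2)).add
      ((integrable_inner_of_integrable_norm_sq (hb t) (hξ t) ih (hξ_sq_int t)).const_mul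
        (2 * α t))).add ((hξ_sq_int t).const_mul (2 * α t ^ 2))
    refine h_dom.mono' ((hb (t + 1)).norm.pow 2) (ae_of_all _ fun ω => ?_)
    rw [Real.norm_of_nonneg (sq_nonneg _)]
    exact norm_sub_sq_succ_le hgrowth hpassive hα hrec t ω

variable [CompleteSpace E]

theorem condExp_norm_sub_sq_succ_le [IsFiniteMeasure μ] (hgrowth : ∀ θ, ‖f θ‖ ≤ K * ‖θ - θstar‖)
    (hpassive : ∀ θ, inner ℝ (θ - θstar) (f θ) ≤ 0) (hα : ∀ t, 0 ≤ α t)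
    (hθ : Adapted F θ) (hrec : ∀ t ω, θ (t + 1) ω = θ t ω + α t • (f (θ t ω) + ξ (t + 1) ω))
    (hz : ∀ t, Integrable (fun ω => ‖θ t ω - θstar‖ ^ 2) μ)
    (hξ_int : ∀ t, Integrable (ξ (t + 1)) μ)
    (hξ_sq_int : ∀ t, Integrable (fun ω => ‖ξ (t + 1) ω‖ ^ 2) μ)
    (hmean : ∀ t, μ[ξ (t + 1) | F t] =ᵐ[μ] 0)
    (hvar : ∀ t, μ[fun ω => ‖ξ (t + 1) ω‖ ^ 2 | F t] ≤ᵐ[μ]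
      fun ω => σ ^ 2 * (1 + ‖θ t ω - θstar‖ ^ 2)) (t : ℕ) :
    μ[fun ω => ‖θ (t + 1) ω - θstar‖ ^ 2 | F t] ≤ᵐ[μ]
      fun ω => (1 + (2 * K ^ 2 + 2 * σ ^ 2) * α t ^ 2) * ‖θ t ω - θstar‖ ^ 2 +
        2 * σ ^ 2 * α t ^ 2 := by
  have h_pt := norm_sub_sq_succ_le hgrowth hpassive hα hrec t
  set z : Ω → ℝ := fun ω => ‖θ t ω - θstar‖ ^ 2
  set X : Ω → ℝ := fun ω => inner ℝ (θ t ω - θstar) (ξ (t + 1) ω)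
  set N : Ω → ℝ := fun ω => ‖ξ (t + 1) ω‖ ^ 2
  have hb : StronglyMeasurable[F t] fun ω => θ t ω - θstar :=
    ((hθ t).sub_const θstar).stronglyMeasurable
  have hX_int : Integrable X μ := integrable_inner_of_integrable_norm_sq
    (hb.mono (F.le t)).aestronglyMeasurable (hξ_int t).1 (hz t) (hξ_sq_int t)
  have hX : μ[X | F t] =ᵐ[μ] 0 := by
    filter_upwards [condExp_bilin_of_stronglyMeasurable_left (innerSL ℝ) hb hX_int (hξ_int t),
      hmean t] with ω h_pull h_mean
    refine h_pull.trans ?_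
    simp [h_mean]
  have hz_cond : μ[z | F t] = z :=
    condExp_of_stronglyMeasurable (F.le t) (hb.norm.pow 2) (hz t)
  have h_int₁ : Integrable ((1 + 2 * K ^ 2 * α t ^ 2) • z) μ := (hz t).smul _
  have h_int₂ : Integrable ((2 * α t) • X) μ := hX_int.smul _
  have h_int₃ : Integrable ((2 * α t ^ 2) • N) μ := (hξ_sq_int t).smul _
  filter_upwards [condExp_mono (m := F t) (hz (t + 1)) ((h_int₁.add h_int₂).add h_int₃)
      (ae_of_all _ h_pt),
    condExp_add (h_int₁.add h_int₂) h_int₃ (F t), condExp_add h_int₁ h_int₂ (F t),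
    condExp_smul (1 + 2 * K ^ 2 * α t ^ 2) z (F t), condExp_smul (2 * α t) X (F t),
    condExp_smul (2 * α t ^ 2) N (F t), hX, hvar t] with ω h_mono h_add h_add' h₁ h₂ h₃ hXω hN
  rw [h_add, Pi.add_apply, h_add', Pi.add_apply, h₁, h₂, h₃, hz_cond] at h_mono
  simp only [Pi.smul_apply, smul_eq_mul, hXω, Pi.zero_apply] at h_mono
  nlinarith [mul_le_mul_of_nonneg_left hN (sq_nonneg (α t))]

theorem ae_bddAbove_norm_sub_sq_of_integrable [IsFiniteMeasure μ]
    (hgrowth : ∀ θ, ‖f θ‖ ≤ K * ‖θ - θstar‖) (hpassive : ∀ θ, inner ℝ (θ - θstar) (f θ) ≤ 0)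
    (hα : ∀ t, 0 ≤ α t) (hα2 : Summable fun t => α t ^ 2) (hθ : Adapted F θ)
    (hrec : ∀ t ω, θ (t + 1) ω = θ t ω + α t • (f (θ t ω) + ξ (t + 1) ω))
    (hθ0 : Integrable (fun ω => ‖θ 0 ω - θstar‖ ^ 2) μ)
    (hξ_int : ∀ t, Integrable (ξ (t + 1)) μ)
    (hξ_sq_int : ∀ t, Integrable (fun ω => ‖ξ (t + 1) ω‖ ^ 2) μ)
    (hmean : ∀ t, μ[ξ (t + 1) | F t] =ᵐ[μ] 0)
    (hvar : ∀ t, μ[fun ω => ‖ξ (t + 1) ω‖ ^ 2 | F t] ≤ᵐ[μ]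
      fun ω => σ ^ 2 * (1 + ‖θ t ω - θstar‖ ^ 2)) :
    ∀ᵐ ω ∂μ, BddAbove (Set.range fun t => ‖θ t ω - θstar‖ ^ 2) := by
  have hz :=
    integrable_norm_sub_sq hgrowth hpassive hα hθ hrec hθ0 (fun t => (hξ_int t).1) hξ_sq_int
  exact ae_bddAbove_of_condExp_le_one_add_mul_add (a := fun t => (2 * K ^ 2 + 2 * σ ^ 2) * α t ^ 2)
    (b := fun t => 2 * σ ^ 2 * α t ^ 2)
    (fun t => ((continuous_id.sub continuous_const).norm.pow 2).measurable.comp (hθ t)) hz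
    (fun t => ae_of_all _ fun ω => sq_nonneg _) (fun t => by positivity) (hα2.mul_left _)
    (fun t => by positivity) (hα2.mul_left _)
    (condExp_norm_sub_sq_succ_le hgrowth hpassive hα hθ hrec hz hξ_int hξ_sq_int hmean hvar)

theorem ae_bddAbove_norm_sub_sq_of_mem [IsFiniteMeasure μ]
    (hgrowth : ∀ θ, ‖f θ‖ ≤ K * ‖θ - θstar‖) (hpassive : ∀ θ, inner ℝ (θ - θstar) (f θ) ≤ 0)
    (hα : ∀ t, 0 ≤ α t) (hα2 : Summable fun t => α t ^ 2) (hθ : Adapted F θ)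
    (hrec : ∀ t ω, θ (t + 1) ω = θ t ω + α t • (f (θ t ω) + ξ (t + 1) ω))
    (hξ_int : ∀ t, Integrable (ξ (t + 1)) μ)
    (hξ_sq_int : ∀ t, Integrable (fun ω => ‖ξ (t + 1) ω‖ ^ 2) μ)
    (hmean : ∀ t, μ[ξ (t + 1) | F t] =ᵐ[μ] 0)
    (hvar : ∀ t, μ[fun ω => ‖ξ (t + 1) ω‖ ^ 2 | F t] ≤ᵐ[μ]
      fun ω => σ ^ 2 * (1 + ‖θ t ω - θstar‖ ^ 2))
    {A : Set Ω} (hA : MeasurableSet[F 0] A) {R : ℝ} (hR : ∀ ω ∈ A, ‖θ 0 ω - θstar‖ ≤ R) :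
    ∀ᵐ ω ∂μ, ω ∈ A → BddAbove (Set.range fun t => ‖θ t ω - θstar‖ ^ 2) := by
  classical
  have hzero : f θstar = 0 := norm_le_zero_iff.1 (by simpa using hgrowth θstar)
  have hAt : ∀ t, MeasurableSet[F t] A := fun t => F.mono (Nat.zero_le t) _ hA
  have hA0 : MeasurableSet A := F.le 0 _ hA
  have hθA : Adapted F fun t ω => if ω ∈ A then θ t ω else θstar := fun t =>
    Measurable.ite (hAt t) (hθ t) measurable_const
  have hξA_sq : ∀ t, (fun ω => ‖A.indicator (ξ t) ω‖ ^ 2) = A.indicator fun ω => ‖ξ t ω‖ ^ 2 :=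
    fun t => funext fun ω => by by_cases hω : ω ∈ A <;> simp [hω]
  have hθA0 : Integrable (fun ω => ‖(if ω ∈ A then θ 0 ω else θstar) - θstar‖ ^ 2) μ := by
    refine .of_bound ((((hθA 0).mono (F.le 0) le_rfl).sub_const θstar).norm.pow_const 2
      |>.aestronglyMeasurable) (R ^ 2) (ae_of_all _ fun ω => ?_)
    by_cases hω : ω ∈ A
    · simpa [hω] using pow_le_pow_left₀ (norm_nonneg _) (hR ω hω) 2
    · simp [hω, sq_nonneg R]
  have h_loc := ae_bddAbove_norm_sub_sq_of_integrable (μ := μ) (ξ := fun t => A.indicator (ξ t))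
    hgrowth hpassive hα hα2 hθA
    (fun t ω => by by_cases hω : ω ∈ A <;> simp [hω, hrec, hzero])
    hθA0
    (fun t => (hξ_int t).indicator hA0)
    (fun t => by simpa only [hξA_sq] using (hξ_sq_int t).indicator hA0)
    (fun t => by
      filter_upwards [condExp_indicator (hξ_int t) (hAt t), hmean t] with ω h_ind h_mean
      by_cases hω : ω ∈ A <;> simp [h_ind, h_mean, hω])
    (fun t => by
      rw [hξA_sq]
      filter_upwards [condExp_indicator (hξ_sq_int t) (hAt t), hvar t] with ω h_ind h_var
      by_cases hω : ω ∈ A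
      · simpa [h_ind, hω] using h_var
      · simp [h_ind, hω]
        positivity)
  filter_upwards [h_loc] with ω hω hωA
  simpa [hωA] using hω

end Gladyshev

theorem stmt_19_general {d : ℕ} {Ω : Type*} {m0 : MeasurableSpace Ω} {μ : Measure Ω}
    [IsProbabilityMeasure μ] (F : Filtration ℕ m0)
    (f : EuclideanSpace ℝ (Fin d) → EuclideanSpace ℝ (Fin d))
    (θstar : EuclideanSpace ℝ (Fin d)) (K σ : ℝ)
    (hgrowth : ∀ θ, ‖f θ‖ ≤ K * ‖θ - θstar‖)
    (hpassive : ∀ θ, (inner ℝ (θ - θstar) (f θ) : ℝ) ≤ 0)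
    (α : ℕ → ℝ) (hα : ∀ t, α t ∈ Set.Ioo (0:ℝ) 1)
    (hα2 : Summable (fun t => (α t) ^ 2))
    (θ : ℕ → Ω → EuclideanSpace ℝ (Fin d))
    (ξ : ℕ → Ω → EuclideanSpace ℝ (Fin d))
    (hθ_adapted : Adapted F θ)
    (hrec : ∀ (t : ℕ) (ω : Ω),
      θ (t + 1) ω = θ t ω + α t • (f (θ t ω) + ξ (t + 1) ω))
    (hξ_int : ∀ t : ℕ, Integrable (ξ (t + 1)) μ)
    (hξ_sq_int : ∀ t : ℕ, Integrable (fun ω => ‖ξ (t + 1) ω‖ ^ 2) μ)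
    (hmean : ∀ t : ℕ, μ[ξ (t + 1) | F t] =ᵐ[μ] 0)
    (hvar : ∀ t : ℕ, μ[fun ω => ‖ξ (t + 1) ω‖ ^ 2 | F t] ≤ᵐ[μ]
        fun ω => σ ^ 2 * (1 + ‖θ t ω - θstar‖ ^ 2)) :
    ∀ᵐ ω ∂μ, ∃ C : ℝ, ∀ t : ℕ, ‖θ t ω‖ ≤ C := by
  have h_on : ∀ n : ℕ, ∀ᵐ ω ∂μ, θ 0 ω ∈ Metric.closedBall θstar n →
      BddAbove (Set.range fun t => ‖θ t ω - θstar‖ ^ 2) := fun n =>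
    ae_bddAbove_norm_sub_sq_of_mem hgrowth hpassive (fun t => (hα t).1.le) hα2 hθ_adapted hrec
      hξ_int hξ_sq_int hmean hvar (hθ_adapted 0 Metric.isClosed_closedBall.measurableSet)
      fun _ hω => mem_closedBall_iff_norm.1 hω
  filter_upwards [ae_all_iff.2 h_on] with ω hω
  obtain ⟨B, hB⟩ := hω _ (mem_closedBall_iff_norm.2 (Nat.le_ceil ‖θ 0 ω - θstar‖))
  refine ⟨‖θstar‖ + 1 + B, fun t => ?_⟩
  have h_sq : ‖θ t ω - θstar‖ ^ 2 ≤ B := hB (Set.mem_range_self t)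
  nlinarith [norm_le_norm_add_norm_sub' (θ t ω) θstar, sq_nonneg (‖θ t ω - θstar‖ - 1)]

theorem stmt_19 {d : ℕ} {Ω : Type*} {m0 : MeasurableSpace Ω} {μ : Measure Ω}
    [IsProbabilityMeasure μ] (F : Filtration ℕ m0)
    (f : EuclideanSpace ℝ (Fin d) → EuclideanSpace ℝ (Fin d))
    (θstar : EuclideanSpace ℝ (Fin d)) (K σ : ℝ)
    (hzero : f θstar = 0)
    (hgrowth : ∀ θ, ‖f θ‖ ≤ K * ‖θ - θstar‖)
    (hpassive : ∀ θ, (inner ℝ (θ - θstar) (f θ) : ℝ) ≤ 0)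
    (α : ℕ → ℝ) (hα : ∀ t, α t ∈ Set.Ioo (0:ℝ) 1)
    (hα2 : Summable (fun t => (α t) ^ 2))
    (θ : ℕ → Ω → EuclideanSpace ℝ (Fin d))
    (ξ : ℕ → Ω → EuclideanSpace ℝ (Fin d))
    (hθ_adapted : Adapted F θ)
    (hξ_adapted : ∀ t : ℕ, Measurable[F (t + 1)] (ξ (t + 1)))
    (hrec : ∀ (t : ℕ) (ω : Ω),
      θ (t + 1) ω = θ t ω + α t • (f (θ t ω) + ξ (t + 1) ω))
    (hξ_int : ∀ t : ℕ, Integrable (ξ (t + 1)) μ)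
    (hξ_sq_int : ∀ t : ℕ, Integrable (fun ω => ‖ξ (t + 1) ω‖ ^ 2) μ)
    (hmean : ∀ t : ℕ, μ[ξ (t + 1) | F t] =ᵐ[μ] 0)
    (hvar : ∀ t : ℕ, μ[fun ω => ‖ξ (t + 1) ω‖ ^ 2 | F t] ≤ᵐ[μ]
        fun ω => σ ^ 2 * (1 + ‖θ t ω - θstar‖ ^ 2)) :
    ∀ᵐ ω ∂μ, ∃ C : ℝ, ∀ t : ℕ, ‖θ t ω‖ ≤ C :=
  stmt_19_general F f θstar K σ hgrowth hpassive α hα hα2 θ ξ hθ_adapted hrec hξ_int hξ_sq_int hmean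
    hvar
end
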